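/- arXiv:math/0310072 — 3 statements merged into one kernel-verified Lean document; each statement's English description precedes it below -/
import Mathlib

section
/- For a Lie algebroid E of rank n with trivializable ⋀ⁿE* and nowhere-vanishing top form μ, the isomorphism *_μ(a) = i_a μ intertwines ∂_μ and d up to sign, and hence induces Poincaré duality isomorphisms H^k(E, d) ≅ H_{n−k}(E, ∂_μ) for all k. -/
/-- The sign `(-1)^e` for an integer `e`. -/
def sgn (e : ℤ) : ℤ := (((-1 : ℤˣ) ^ e : ℤˣ) : ℤ)

/-- Degree-`k` cohomology of a graded complex: (degree-`k` cocycles) / (d of degree-`k−1`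
elements). -/
abbrev gradedCohomology {B : Type*} [AddCommGroup B] [Module ℝ B]
    (HB : ℤ → Submodule ℝ B) (d : B →ₗ[ℝ] B) (k : ℤ) :=
  ↥(HB k ⊓ LinearMap.ker d) ⧸
    (Submodule.comap (HB k ⊓ LinearMap.ker d).subtype (Submodule.map d (HB (k - 1))))

/-- Degree-`j` homology of a graded complex with differential of degree `−1`. -/
abbrev gradedHomology {A : Type*} [AddCommGroup A] [Module ℝ A]
    (HA : ℤ → Submodule ℝ A) (D : A →ₗ[ℝ] A) (j : ℤ) :=
  ↥(HA j ⊓ LinearMap.ker D) ⧸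
    (Submodule.comap (HA j ⊓ LinearMap.ker D).subtype (Submodule.map D (HA (j + 1))))

lemma sgn_sgn_smul {A : Type*} [AddCommGroup A] (e : ℤ) (x : A) :
    sgn e • sgn e • x = x := by
  rw [smul_smul]
  have h : sgn e * sgn e = 1 := by
    unfold sgn; rw [← Units.val_mul, Int.units_mul_self]; rfl
  rw [h, one_smul]

/-- For a Lie algebroid `E` of rank `n` with trivializable `⋀ⁿE*` and
nowhere-vanishing top form `μ`, the isomorphism `*_μ(a) = i_a μ` (here the graded linear
equivalence `star`, sending degree `k` to degree `n−k`) intertwines `∂_μ` and `d` up to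
sign (`∂_μ a = (−1)^{|a|} *_μ^{-1} d *_μ a`), and hence induces Poincaré duality
`H^k(E,d) ≅ H_{n−k}(E,∂_μ)` for all `k`. -/
theorem statement13 {A : Type*} [AddCommGroup A] [Module ℝ A]
    {B : Type*} [AddCommGroup B] [Module ℝ B]
    (n : ℕ)
    (HA : ℤ → Submodule ℝ A) (HB : ℤ → Submodule ℝ B)
    (hspanA : ∀ a : A, a ∈ Submodule.span ℝ (⋃ k : ℤ, (HA k : Set A)))
    (d : B →ₗ[ℝ] B)
    (hd2 : d ∘ₗ d = 0)
    (hddeg : ∀ (k : ℤ) (ω : B), ω ∈ HB k → d ω ∈ HB (k + 1))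
    (star : A ≃ₗ[ℝ] B)
    (hstar : ∀ k : ℤ, Submodule.map (star : A →ₗ[ℝ] B) (HA k) = HB ((n : ℤ) - k))
    (D : A →ₗ[ℝ] A)
    (hDdef : ∀ (k : ℤ) (a : A), a ∈ HA k → D a = sgn k • star.symm (d (star a))) :
    ∀ k : ℤ, Nonempty (gradedCohomology HB d k ≃ₗ[ℝ] gradedHomology HA D ((n : ℤ) - k)) := by
  intro k
  set j : ℤ := (n : ℤ) - k with hj
  have hk : (n : ℤ) - j = k := by omega
  have hk1 : (n : ℤ) - (j + 1) = k - 1 := by omega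
  -- membership transfer
  have hmem : ∀ (m : ℤ) (a : A), a ∈ HA m ↔ star a ∈ HB ((n : ℤ) - m) := by
    intro m a
    constructor
    · intro h; rw [← hstar m]; exact Submodule.mem_map_of_mem h
    · intro h
      rw [← hstar m, Submodule.mem_map] at h
      obtain ⟨y, hy, hye⟩ := h
      have : y = a := star.injective hye
      rwa [← this]
  -- the submodule equality for cocycles
  have hST : Submodule.map (star.symm : B →ₗ[ℝ] A) (HB k ⊓ LinearMap.ker d)
      = HA j ⊓ LinearMap.ker D := by
    apply le_antisymm
    · rintro a ⟨x, ⟨hxk, hxd⟩, rfl⟩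
      have hxd' : d x = 0 := hxd
      have hmemA : star.symm x ∈ HA j := by
        rw [hmem j, LinearEquiv.apply_symm_apply, hk]; exact hxk
      refine ⟨hmemA, ?_⟩
      have := hDdef j (star.symm x) hmemA
      simp only [LinearEquiv.apply_symm_apply, hxd', map_zero, smul_zero] at this
      exact this
    · rintro a ⟨haj, haD⟩
      have haD' : D a = 0 := haD
      have hsx : star a ∈ HB k := by rw [← hk]; exact (hmem j a).mp haj
      refine ⟨star a, ⟨hsx, ?_⟩, star.symm_apply_apply a⟩
      have h1 := hDdef j a haj
      rw [haD'] at h1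
      have h2 : star.symm (d (star a)) = 0 := by
        have := congrArg (fun y => sgn j • y) h1
        simpa [sgn_sgn_smul] using this.symm
      have h3 := congrArg star h2
      simpa using h3
  let f := star.symm.ofSubmodules (HB k ⊓ LinearMap.ker d) (HA j ⊓ LinearMap.ker D) hST
  -- boundary submodule equality
  have hbd : Submodule.map (f : ↥(HB k ⊓ LinearMap.ker d) →ₗ[ℝ] ↥(HA j ⊓ LinearMap.ker D))
      (Submodule.comap (HB k ⊓ LinearMap.ker d).subtype (Submodule.map d (HB (k - 1))))
      = Submodule.comap (HA j ⊓ LinearMap.ker D).subtype (Submodule.map D (HA (j + 1))) := by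
    apply le_antisymm
    · rintro t ⟨x, hx, rfl⟩
      obtain ⟨ω, hω, hdω⟩ := hx
      -- show (f x : A) = star.symm x ∈ D '' HA (j+1)
      have hfx : ((f x : ↥(HA j ⊓ LinearMap.ker D)) : A) = star.symm (x : B) :=
        LinearEquiv.ofSubmodules_apply _ _ x
      simp only [Submodule.mem_comap, Submodule.coe_subtype, LinearEquiv.coe_coe]
      rw [hfx]
      refine ⟨sgn (j + 1) • star.symm ω, ?_, ?_⟩
      · exact Submodule.smul_of_tower_mem _ _ (by
          rw [hmem (j+1), LinearEquiv.apply_symm_apply, hk1]; exact hω)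
      · have hmem1 : sgn (j + 1) • star.symm ω ∈ HA (j + 1) :=
          Submodule.smul_of_tower_mem _ _ (by
            rw [hmem (j+1), LinearEquiv.apply_symm_apply, hk1]; exact hω)
        rw [hDdef (j+1) _ hmem1]
        rw [map_zsmul, LinearEquiv.apply_symm_apply, map_zsmul, map_zsmul, sgn_sgn_smul, hdω]
        rfl
    · rintro t ht
      simp only [Submodule.mem_comap, Submodule.coe_subtype] at ht
      obtain ⟨a, ha, hDa⟩ := ht
      -- preimage: x := star t.1
      have htk : (t : A) ∈ HA j := t.2.1
      have hx : star (t : A) ∈ HB k ⊓ LinearMap.ker d := by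
        have h2 : (t : A) ∈ Submodule.map (star.symm : B →ₗ[ℝ] A)
            (HB k ⊓ LinearMap.ker d) := by rw [hST]; exact t.2
        obtain ⟨y, hy, hye⟩ := h2
        have hy2 : y = star (t : A) := by
          rw [← hye]; exact (star.apply_symm_apply y).symm
        rwa [← hy2]
      refine ⟨⟨star (t : A), hx⟩, ?_, ?_⟩
      · -- star t.1 ∈ map d (HB (k-1))
        have h1 := hDdef (j+1) a ha
        have h3 : star ((t : A)) = sgn (j+1) • d (star a) := by
          rw [← hDa, h1, map_zsmul, LinearEquiv.apply_symm_apply]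
        refine Submodule.mem_comap.mpr ⟨sgn (j + 1) • star a, ?_, ?_⟩
        · exact Submodule.smul_of_tower_mem _ _ (by rw [← hk1]; exact (hmem (j+1) a).mp ha)
        · show d (sgn (j + 1) • star a) = star ((t : A))
          rw [map_zsmul, h3]
      · -- f applied gives t
        apply Subtype.ext
        simp only [LinearEquiv.coe_coe]
        have hfx : ((f ⟨star (t : A), hx⟩ : ↥(HA j ⊓ LinearMap.ker D)) : A)
            = star.symm (star (t : A)) :=
          LinearEquiv.ofSubmodules_apply _ _ _
        rw [hfx, star.symm_apply_apply]
  exact ⟨Submodule.Quotient.equiv _ _ f hbd⟩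
end

section
/- For a Lie algebroid E of rank n with nowhere-vanishing top form μ and a closed 1-form φ, the deformed differential d^φ η = dη + φ∧η satisfies (d^φ)² = 0, and *_μ intertwines ∂_μ − i_φ with d + e_φ up to sign: (−1)^{|a|} *_μ^{-1}(d + e_φ) *_μ(a) = (∂_μ − i_φ)(a), yielding Poincaré duality H^k(E, d^φ) ≅ H_{n−k}(E, ∂_μ − i_φ). -/
lemma sgn_one : sgn 1 = -1 := by decide

lemma sgn_smul_sgn_smul {M : Type*} [AddCommGroup M] (e : ℤ) (x : M) :
    sgn e • sgn e • x = x := by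
  rw [smul_smul, sgn, ← Units.val_mul, Int.units_mul_self, Units.val_one, one_zsmul]

lemma sgn_smul_eq_zero_iff {M : Type*} [AddCommGroup M] (e : ℤ) {x : M} :
    sgn e • x = 0 ↔ x = 0 :=
  ⟨fun h => by rw [← sgn_smul_sgn_smul e x, h, smul_zero], fun h => by rw [h, smul_zero]⟩

lemma eq_zero_of_eq_neg {M : Type*} [AddCommGroup M] [Module ℝ M] {x : M} (h : x = -x) :
    x = 0 := by
  have h2 : (2 : ℝ) • x = 0 := by rw [two_smul]; nth_rw 1 [h]; exact neg_add_cancel x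
  exact (smul_eq_zero.mp h2).resolve_left two_ne_zero

lemma twisted_differential_sq_eq_zero {B : Type*} [Ring B] [Algebra ℝ B] (d : B →ₗ[ℝ] B)
    (hd2 : d ∘ₗ d = 0) (φ : B) (hLeib : ∀ ω, d (φ * ω) = d φ * ω - φ * d ω)
    (hφclosed : d φ = 0) (hφφ : φ * φ = 0) (ω : B) :
    (d + LinearMap.mulLeft ℝ φ) ((d + LinearMap.mulLeft ℝ φ) ω) = 0 := by
  have hdd : d (d ω) = 0 := LinearMap.congr_fun hd2 ω
  simp only [LinearMap.add_apply, LinearMap.mulLeft_apply, map_add]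
  rw [hdd, hLeib, hφclosed, zero_mul, ← mul_assoc, hφφ, zero_mul]
  abel

def LinearEquiv.subquotientCongr {R M N : Type*} [Ring R] [AddCommGroup M] [Module R M]
    [AddCommGroup N] [Module R N] (e : M ≃ₗ[R] N) {P Q : Submodule R M} {P' Q' : Submodule R N}
    (hP : P.map (e : M →ₗ[R] N) = P') (hQ : Q.map (e : M →ₗ[R] N) = Q') :
    (P ⧸ Q.comap P.subtype) ≃ₗ[R] (P' ⧸ Q'.comap P'.subtype) :=
  Submodule.Quotient.equiv _ _ ((e.submoduleMap P).trans (LinearEquiv.ofEq _ _ hP)) <| by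
    ext x
    rw [Submodule.mem_map_equiv, Submodule.mem_comap, Submodule.mem_comap, ← hQ,
      Submodule.mem_map_equiv]
    rfl

section Intertwining

variable {A B : Type*} [AddCommGroup A] [Module ℝ A] [AddCommGroup B] [Module ℝ B]
  (e : A ≃ₗ[ℝ] B) (D : A →ₗ[ℝ] A) (d : B →ₗ[ℝ] B) (p : Submodule ℝ A) (u : ℤ)

lemma map_inf_ker_of_intertwine (h : ∀ a ∈ p, e (D a) = sgn u • d (e a)) :
    (p ⊓ LinearMap.ker D).map (e : A →ₗ[ℝ] B) = p.map (e : A →ₗ[ℝ] B) ⊓ LinearMap.ker d := by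
  ext x
  simp only [Submodule.mem_inf, Submodule.mem_map_equiv, LinearMap.mem_ker]
  refine and_congr_right fun hx => ?_
  rw [← e.map_eq_zero_iff, h _ hx, e.apply_symm_apply, sgn_smul_eq_zero_iff]

lemma map_map_of_intertwine (h : ∀ a ∈ p, e (D a) = sgn u • d (e a)) :
    (p.map D).map (e : A →ₗ[ℝ] B) = (p.map (e : A →ₗ[ℝ] B)).map d := by
  rw [← Submodule.map_comp, ← Submodule.map_comp]
  apply le_antisymm <;> rintro _ ⟨a, ha, rfl⟩
  · refine ⟨sgn u • a, p.toAddSubgroup.zsmul_mem ha _, ?_⟩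
    simp only [LinearMap.comp_apply, LinearEquiv.coe_coe, map_zsmul, h a ha]
  · refine ⟨sgn u • a, p.toAddSubgroup.zsmul_mem ha _, ?_⟩
    simp only [LinearMap.comp_apply, LinearEquiv.coe_coe, map_zsmul, h a ha,
      sgn_smul_sgn_smul]

end Intertwining

theorem nonempty_gradedCohomology_equiv_gradedHomology {A B : Type*} [AddCommGroup A]
    [Module ℝ A] [AddCommGroup B] [Module ℝ B] (n k : ℤ) (HA : ℤ → Submodule ℝ A)
    (HB : ℤ → Submodule ℝ B) (e : A ≃ₗ[ℝ] B)
    (he : ∀ j, (HA j).map (e : A →ₗ[ℝ] B) = HB (n - j)) (D : A →ₗ[ℝ] A) (d : B →ₗ[ℝ] B)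
    (hintw : ∀ j, ∀ a ∈ HA j, e (D a) = sgn j • d (e a)) :
    Nonempty (gradedCohomology HB d k ≃ₗ[ℝ] gradedHomology HA D (n - k)) := by
  have hcycles := map_inf_ker_of_intertwine e D d (HA (n - k)) _ (hintw (n - k))
  have hboundaries := map_map_of_intertwine e D d (HA (n - k + 1)) _ (hintw (n - k + 1))
  rw [he, sub_sub_cancel] at hcycles
  rw [he, show n - (n - k + 1) = k - 1 by ring] at hboundaries
  exact ⟨(e.subquotientCongr hcycles hboundaries).symm⟩

lemma sgn_smul_symm_twisted_eq {A B : Type*} [AddCommGroup A] [Module ℝ A] [Ring B]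
    [Algebra ℝ B] (star : A ≃ₗ[ℝ] B) (d : B →ₗ[ℝ] B) (φ : B) (D insφ : A →ₗ[ℝ] A) (k : ℤ)
    (a : A) (hD : D a = sgn k • star.symm (d (star a)))
    (hkey : star (insφ a) = -(sgn k • (φ * star a))) :
    sgn k • star.symm (d (star a) + φ * star a) = D a - insφ a := by
  have hins : insφ a = -(sgn k • star.symm (φ * star a)) := by
    rw [← star.symm_apply_apply (insφ a), hkey, map_neg, map_zsmul]
  rw [map_add, smul_add, ← hD, hins, sub_neg_eq_add]

theorem statement14_general {A : Type*} [AddCommGroup A] [Module ℝ A]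
    {B : Type*} [Ring B] [Algebra ℝ B]
    (n : ℕ)
    (HA : ℤ → Submodule ℝ A) (HB : ℤ → Submodule ℝ B)
    (hcommB : ∀ (i j : ℤ) (a b : B), a ∈ HB i → b ∈ HB j → a * b = sgn (i * j) • (b * a))
    (d : B →ₗ[ℝ] B)
    (hd2 : d ∘ₗ d = 0)
    (hdLeib : ∀ (k : ℤ) (a b : B), a ∈ HB k → d (a * b) = d a * b + sgn k • (a * d b))
    -- the closed 1-form φ, as a form
    (φ : B) (hφdeg : φ ∈ HB 1) (hφclosed : d φ = 0)
    -- the isomorphism *_μ and the operator ∂_μ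
    (star : A ≃ₗ[ℝ] B)
    (hstar : ∀ k : ℤ, Submodule.map (star : A →ₗ[ℝ] B) (HA k) = HB ((n : ℤ) - k))
    (D : A →ₗ[ℝ] A)
    (hDdef : ∀ (k : ℤ) (a : A), a ∈ HA k → D a = sgn k • star.symm (d (star a)))
    -- contraction of multivectors by φ, with the key identity i(i_φ a)μ = −(−1)^{|a|} φ ∧ i_a μ
    (insφ : A →ₗ[ℝ] A)
    (hkey : ∀ (k : ℤ) (a : A), a ∈ HA k → star (insφ a) = -(sgn k • (φ * star a))) :
    (∀ ω : B, (d + LinearMap.mulLeft ℝ φ) ((d + LinearMap.mulLeft ℝ φ) ω) = 0) ∧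
    (∀ (k : ℤ) (a : A), a ∈ HA k →
      sgn k • star.symm (d (star a) + φ * star a) = D a - insφ a) ∧
    (∀ k : ℤ, Nonempty
      (gradedCohomology HB (d + LinearMap.mulLeft ℝ φ) k ≃ₗ[ℝ]
        gradedHomology HA (D - insφ) ((n : ℤ) - k))) := by
  have hφφ : φ * φ = 0 := by
    have hanti := hcommB 1 1 φ φ hφdeg hφdeg
    rw [one_mul, sgn_one, neg_one_zsmul] at hanti
    exact eq_zero_of_eq_neg hanti
  have hLeib ω : d (φ * ω) = d φ * ω - φ * d ω := by
    rw [hdLeib 1 φ ω hφdeg, sgn_one, neg_one_zsmul, sub_eq_add_neg]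
  have hintw k a (ha : a ∈ HA k) :
      sgn k • star.symm (d (star a) + φ * star a) = D a - insφ a :=
    sgn_smul_symm_twisted_eq star d φ D insφ k a (hDdef k a ha) (hkey k a ha)
  refine ⟨twisted_differential_sq_eq_zero d hd2 φ hLeib hφclosed hφφ, hintw, fun k => ?_⟩
  refine nonempty_gradedCohomology_equiv_gradedHomology n k HA HB star hstar _ _ fun j a ha => ?_
  rw [LinearMap.sub_apply, ← hintw j a ha, map_zsmul, star.apply_symm_apply]
  rfl

/-- For a Lie algebroid `E` of rank `n` with nowhere-vanishing top form `μ`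
and a closed 1-form `φ`, the deformed (Witten) differential `d^φ η = dη + φ∧η` satisfies
`(d^φ)² = 0`, the isomorphism `*_μ` intertwines `∂_μ − i_φ` with `d + e_φ` up to sign:
`(−1)^{|a|} *_μ^{-1}((d + e_φ)(*_μ a)) = (∂_μ − i_φ)(a)`, and there is Poincaré duality
`H^k(E, d^φ) ≅ H_{n−k}(E, ∂_μ − i_φ)`.  The key identity `i(i_φ a)μ = −(−1)^{|a|} φ ∧ i_a μ`
is encoded by `hkey`. -/
theorem statement14 {A : Type*} [AddCommGroup A] [Module ℝ A]
    {B : Type*} [Ring B] [Algebra ℝ B]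
    (n : ℕ)
    (HA : ℤ → Submodule ℝ A) (HB : ℤ → Submodule ℝ B)
    (hspanA : ∀ a : A, a ∈ Submodule.span ℝ (⋃ k : ℤ, (HA k : Set A)))
    (hmulB : ∀ (i j : ℤ) (a b : B), a ∈ HB i → b ∈ HB j → a * b ∈ HB (i + j))
    (hcommB : ∀ (i j : ℤ) (a b : B), a ∈ HB i → b ∈ HB j → a * b = sgn (i * j) • (b * a))
    (d : B →ₗ[ℝ] B)
    (hd2 : d ∘ₗ d = 0)
    (hddeg : ∀ (k : ℤ) (ω : B), ω ∈ HB k → d ω ∈ HB (k + 1))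
    (hdLeib : ∀ (k : ℤ) (a b : B), a ∈ HB k → d (a * b) = d a * b + sgn k • (a * d b))
    -- the closed 1-form φ, as a form
    (φ : B) (hφdeg : φ ∈ HB 1) (hφclosed : d φ = 0)
    -- the isomorphism *_μ and the operator ∂_μ
    (star : A ≃ₗ[ℝ] B)
    (hstar : ∀ k : ℤ, Submodule.map (star : A →ₗ[ℝ] B) (HA k) = HB ((n : ℤ) - k))
    (D : A →ₗ[ℝ] A)
    (hDdef : ∀ (k : ℤ) (a : A), a ∈ HA k → D a = sgn k • star.symm (d (star a)))
    -- contraction of multivectors by φ, with the key identity i(i_φ a)μ = −(−1)^{|a|} φ ∧ i_a μ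
    (insφ : A →ₗ[ℝ] A)
    (hinsdeg : ∀ (k : ℤ) (a : A), a ∈ HA k → insφ a ∈ HA (k - 1))
    (hkey : ∀ (k : ℤ) (a : A), a ∈ HA k → star (insφ a) = -(sgn k • (φ * star a))) :
    (∀ ω : B, (d + LinearMap.mulLeft ℝ φ) ((d + LinearMap.mulLeft ℝ φ) ω) = 0) ∧
    (∀ (k : ℤ) (a : A), a ∈ HA k →
      sgn k • star.symm (d (star a) + φ * star a) = D a - insφ a) ∧
    (∀ k : ℤ, Nonempty
      (gradedCohomology HB (d + LinearMap.mulLeft ℝ φ) k ≃ₗ[ℝ]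
        gradedHomology HA (D - insφ) ((n : ℤ) - k))) :=
  statement14_general n HA HB hcommB d hd2 hdLeib φ hφdeg hφclosed star hstar D hDdef insφ hkey
end

section
/- For a base-preserving Lie algebroid morphism κ : E₁ → E₂, the modular class satisfies Mod(κ) = Mod(E₁) − κ*(Mod(E₂)), where Mod(Eₗ) is the modular class of the anchor ρₗ : Eₗ → TM and κ* : H¹(E₂,d₂) → H¹(E₁,d₁) is the pullback in Lie algebroid cohomology. -/
/-- For a base-preserving Lie algebroid morphism `κ : E₁ → E₂`, the modular
class satisfies `Mod(κ) = Mod(E₁) − κ*(Mod(E₂))` in `H¹(E₁,d₁)`.  Here `Mod(κ)` is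
represented by `ηκ` with `i_{ηκ} = κ*(div₂) − div₁`, and `Mod(Eₗ) = Mod(ρₗ)` is
represented by `ηₗ` with `i_{ηₗ} = ρₗ*(div_{TM}) − divₗ`, for distinguished divergences
`divₗ` on `Eₗ` and `div_{TM}` on `TM` (vector fields = derivations); equality of classes
means the difference of representatives is an exact 1-form `df`. -/
theorem statement16 {C : Type*} [CommRing C] [Algebra ℝ C]
    {L₁ : Type*} [AddCommGroup L₁] [Module C L₁] [LieRing L₁]
    {L₂ : Type*} [AddCommGroup L₂] [Module C L₂] [LieRing L₂]
    (ρ₁ : L₁ →ₗ[C] Derivation ℝ C C) (ρ₂ : L₂ →ₗ[C] Derivation ℝ C C)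
    (hρ₁br : ∀ X Y : L₁, ρ₁ ⁅X, Y⁆ = ⁅ρ₁ X, ρ₁ Y⁆)
    (hρ₂br : ∀ X Y : L₂, ρ₂ ⁅X, Y⁆ = ⁅ρ₂ X, ρ₂ Y⁆)
    (κ : L₁ →ₗ[C] L₂)
    (hκbr : ∀ X Y : L₁, κ ⁅X, Y⁆ = ⁅κ X, κ Y⁆)
    (hκρ : ∀ X : L₁, ρ₁ X = ρ₂ (κ X))
    (div₁ : L₁ → C) (div₂ : L₂ → C) (divT : Derivation ℝ C C → C)
    (hsmul₁ : ∀ (f : C) (X : L₁), div₁ (f • X) = f * div₁ X + ρ₁ X f)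
    (hsmul₂ : ∀ (f : C) (X : L₂), div₂ (f • X) = f * div₂ X + ρ₂ X f)
    (hsmulT : ∀ (f : C) (D : Derivation ℝ C C), divT (f • D) = f * divT D + D f)
    (hcoc₁ : ∀ X Y : L₁, div₁ ⁅X, Y⁆ = ρ₁ X (div₁ Y) - ρ₁ Y (div₁ X))
    (hcoc₂ : ∀ X Y : L₂, div₂ ⁅X, Y⁆ = ρ₂ X (div₂ Y) - ρ₂ Y (div₂ X))
    (hcocT : ∀ D E : Derivation ℝ C C, divT ⁅D, E⁆ = D (divT E) - E (divT D))
    (η₁ : L₁ →ₗ[C] C) (η₂ : L₂ →ₗ[C] C) (ηκ : L₁ →ₗ[C] C)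
    (hη₁ : ∀ X : L₁, η₁ X = divT (ρ₁ X) - div₁ X)
    (hη₂ : ∀ Y : L₂, η₂ Y = divT (ρ₂ Y) - div₂ Y)
    (hηκ : ∀ X : L₁, ηκ X = div₂ (κ X) - div₁ X) :
    ∃ f : C, ∀ X : L₁, ηκ X = η₁ X - η₂ (κ X) + ρ₁ X f := by
  refine ⟨0, fun X => ?_⟩
  simp [hηκ, hη₁, hη₂, ← hκρ X]
end
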